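/- Arrows comparison: for all unit types U, V and Scalar types T, R, if V→R ⪯ U→T then there exist unit types W₁,…,Wₙ and type variables X₁,…,Xₙ such that U→T ≡ (V→R)[W₁/X₁]…[Wₙ/Xₙ]. -/

import Mathlib

set_option autoImplicit false

namespace Lineal

/-! ### Lineal terms -/

inductive Trm (S : Type) : Type where
  | var : ℕ → Trm S
  | lam : Trm S → Trm S
  | app : Trm S → Trm S → Trm S
  | zero : Trm S
  | smul : S → Trm S → Trm S
  | add : Trm S → Trm S → Trm S

namespace Trm

variable {S : Type}

/-- Basis terms: variables and abstractions. -/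
def IsBasis : Trm S → Prop
  | var _ => True
  | lam _ => True
  | _ => False

/-- de Bruijn shift by `d` of variables `≥ c`. -/
def shift (d : ℕ) : ℕ → Trm S → Trm S
  | c, var k => if k < c then var k else var (k + d)
  | c, lam t => lam (shift d (c + 1) t)
  | c, app t r => app (shift d c t) (shift d c r)
  | _, zero => zero
  | c, smul a t => smul a (shift d c t)
  | c, add t r => add (shift d c t) (shift d c r)

/-- Capture-avoiding substitution `t[s / j]` (de Bruijn). -/
def subst : Trm S → Trm S → ℕ → Trm S
  | var k, s, j => if k = j then s else if j < k then var (k - 1) else var k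
  | lam t, s, j => lam (subst t (shift 1 0 s) (j + 1))
  | app t r, s, j => app (subst t s j) (subst r s j)
  | zero, _, _ => zero
  | smul a t, s, j => smul a (subst t s j)
  | add t r, s, j => add (subst t s j) (subst r s j)

/-- All free variables are `< n`. -/
def ClosedUnder : ℕ → Trm S → Prop
  | n, var k => k < n
  | n, lam t => ClosedUnder (n + 1) t
  | n, app t r => ClosedUnder n t ∧ ClosedUnder n r
  | _, zero => True
  | n, smul _ t => ClosedUnder n t
  | n, add t r => ClosedUnder n t ∧ ClosedUnder n r

/-- Closed terms. -/
def Closed (t : Trm S) : Prop := ClosedUnder 0 t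

def size : Trm S → ℕ
  | var _ => 1
  | lam t => size t + 1
  | app t r => size t + size r + 1
  | zero => 1
  | smul _ t => size t + 1
  | add t r => size t + size r + 1

/-- `(t) r₁ … rₙ`. -/
def appList (t : Trm S) (l : List (Trm S)) : Trm S := l.foldl app t

/-- `t + u₁ + … + uₙ`. -/
def sumList (t : Trm S) (l : List (Trm S)) : Trm S := l.foldl add t

/-- Lifting of a simultaneous substitution under a binder. -/
def msubstLift (ρ : ℕ → Trm S) : ℕ → Trm S
  | 0 => var 0
  | n + 1 => shift 1 0 (ρ n)

/-- Simultaneous substitution of all free variables. -/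
def msubst : (ℕ → Trm S) → Trm S → Trm S
  | ρ, var k => ρ k
  | ρ, lam t => lam (msubst (msubstLift ρ) t)
  | ρ, app t r => app (msubst ρ t) (msubst ρ r)
  | _, zero => zero
  | ρ, smul a t => smul a (msubst ρ t)
  | ρ, add t r => add (msubst ρ t) (msubst ρ r)

end Trm

/-! ### AC equivalence of terms (`+` associative and commutative) -/

inductive ACeq {S : Type} : Trm S → Trm S → Prop
  | refl (t : Trm S) : ACeq t t
  | symm {t u : Trm S} : ACeq t u → ACeq u t
  | trans {t u v : Trm S} : ACeq t u → ACeq u v → ACeq t v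
  | comm (t u : Trm S) : ACeq (Trm.add t u) (Trm.add u t)
  | assoc (t u v : Trm S) : ACeq (Trm.add (Trm.add t u) v) (Trm.add t (Trm.add u v))
  | lamCong {t t' : Trm S} : ACeq t t' → ACeq (Trm.lam t) (Trm.lam t')
  | appCong {t t' r r' : Trm S} : ACeq t t' → ACeq r r' → ACeq (Trm.app t r) (Trm.app t' r')
  | smulCong (a : S) {t t' : Trm S} : ACeq t t' → ACeq (Trm.smul a t) (Trm.smul a t')
  | addCong {t t' r r' : Trm S} : ACeq t t' → ACeq r r' → ACeq (Trm.add t r) (Trm.add t' r')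

/-! ### Reduction -/

/-- `t` is closed and normal (w.r.t. the step relation `St`). -/
def ClosedNormal {S : Type} (St : Trm S → Trm S → Prop) (t : Trm S) : Prop :=
  t.Closed ∧ ∀ u, ¬ St t u

/-- Root rules and one-level contextual closure, parameterised by the step relation `St`
used on proper subterms (both for congruence and for the closed-normal side conditions). -/
inductive Core {S : Type} [CommRing S] (St : Trm S → Trm S → Prop) : Trm S → Trm S → Prop
  -- Elementary rules
  | addZero (t : Trm S) : Core St (Trm.add t Trm.zero) t
  | zeroSmul (t : Trm S) : Core St (Trm.smul 0 t) Trm.zero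
  | oneSmul (t : Trm S) : Core St (Trm.smul 1 t) t
  | smulZero (a : S) : Core St (Trm.smul a Trm.zero) Trm.zero
  | smulSmul (a b : S) (t : Trm S) : Core St (Trm.smul a (Trm.smul b t)) (Trm.smul (a * b) t)
  | smulAdd (a : S) (t r : Trm S) :
      Core St (Trm.smul a (Trm.add t r)) (Trm.add (Trm.smul a t) (Trm.smul a r))
  -- Factorisation rules (side condition : t closed normal)
  | fact1 (a b : S) (t : Trm S) : ClosedNormal St t →
      Core St (Trm.add (Trm.smul a t) (Trm.smul b t)) (Trm.smul (a + b) t)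
  | fact2 (a : S) (t : Trm S) : ClosedNormal St t →
      Core St (Trm.add (Trm.smul a t) t) (Trm.smul (a + 1) t)
  | fact3 (t : Trm S) : ClosedNormal St t →
      Core St (Trm.add t t) (Trm.smul (1 + 1) t)
  -- Application rules
  | appAddL (t r u : Trm S) : ClosedNormal St (Trm.add t r) →
      Core St (Trm.app (Trm.add t r) u) (Trm.add (Trm.app t u) (Trm.app r u))
  | appAddR (u t r : Trm S) : ClosedNormal St (Trm.add t r) →
      Core St (Trm.app u (Trm.add t r)) (Trm.add (Trm.app u t) (Trm.app u r))
  | appSmulL (a : S) (t r : Trm S) : ClosedNormal St t →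
      Core St (Trm.app (Trm.smul a t) r) (Trm.smul a (Trm.app t r))
  | appSmulR (a : S) (r t : Trm S) : ClosedNormal St t →
      Core St (Trm.app r (Trm.smul a t)) (Trm.smul a (Trm.app r t))
  | appZeroL (t : Trm S) : Core St (Trm.app Trm.zero t) Trm.zero
  | appZeroR (t : Trm S) : Core St (Trm.app t Trm.zero) Trm.zero
  -- Beta reduction (b a basis term)
  | beta (t b : Trm S) : Trm.IsBasis b → Core St (Trm.app (Trm.lam t) b) (Trm.subst t b 0)
  -- Contextual closure
  | lamCong {t t' : Trm S} : St t t' → Core St (Trm.lam t) (Trm.lam t')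
  | appL {t t' : Trm S} (r : Trm S) : St t t' → Core St (Trm.app t r) (Trm.app t' r)
  | appR (t : Trm S) {r r' : Trm S} : St r r' → Core St (Trm.app t r) (Trm.app t r')
  | smulCong (a : S) {t t' : Trm S} : St t t' → Core St (Trm.smul a t) (Trm.smul a t')
  | addL {t t' : Trm S} (r : Trm S) : St t t' → Core St (Trm.add t r) (Trm.add t' r)
  | addR (t : Trm S) {r r' : Trm S} : St r r' → Core St (Trm.add t r) (Trm.add t r')

/-- Stratified step relation: `StepN n` is the one-step reduction (modulo AC),
adequate for terms of size at most `n`. -/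
def StepN {S : Type} [CommRing S] : ℕ → Trm S → Trm S → Prop
  | 0, _, _ => False
  | n + 1, t, t' => ∃ u u', ACeq t u ∧ Core (StepN n) u u' ∧ ACeq u' t'

/-- One-step reduction of Lineal, on terms considered modulo AC of `+`. -/
def Step {S : Type} [CommRing S] (t t' : Trm S) : Prop := StepN t.size t t'

/-- Many-step reduction. -/
def RedStar {S : Type} [CommRing S] : Trm S → Trm S → Prop := Relation.ReflTransGen Step

/-- `t` is strongly normalising: every reduction sequence from `t` is finite. -/
def StronglyNormalising {S : Type} [CommRing S] (t : Trm S) : Prop :=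
  Acc (fun a b => Step b a) t

/-- The set of strongly normalising terms. -/
def SNset (S : Type) [CommRing S] : Set (Trm S) := { t | StronglyNormalising t }

end Lineal

namespace Lineal

/-! ### Scalar types -/

inductive STy (S : Type) : Type where
  | var : ℕ → STy S
  | arrow : STy S → STy S → STy S
  | all : STy S → STy S
  | smul : S → STy S → STy S
  | zero : STy S

namespace STy

mutual
  /-- Unit types: `U ::= X | U → T | ∀X.U`. -/
  inductive IsUnit {S : Type} : STy S → Prop
    | var (n : ℕ) : IsUnit (STy.var n)
    | arrow {U T : STy S} : IsUnit U → WF T → IsUnit (STy.arrow U T)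
    | all {U : STy S} : IsUnit U → IsUnit (STy.all U)
  /-- Scalar types: `T ::= U | ∀X.T | α.T | 0̄`. -/
  inductive WF {S : Type} : STy S → Prop
    | unit {U : STy S} : IsUnit U → WF U
    | all {T : STy S} : WF T → WF (STy.all T)
    | smul (a : S) {T : STy S} : WF T → WF (STy.smul a T)
    | zero : WF STy.zero
end

variable {S : Type}

/-- de Bruijn shift of type variables. -/
def shiftTV (d : ℕ) : ℕ → STy S → STy S
  | c, var k => if k < c then var k else var (k + d)
  | c, arrow A B => arrow (shiftTV d c A) (shiftTV d c B)
  | c, all T => all (shiftTV d (c + 1) T)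
  | c, smul a T => smul a (shiftTV d c T)
  | _, zero => zero

/-- `T[U / j]`: capture-avoiding substitution for the type variable `j` (removing it). -/
def substTV : STy S → STy S → ℕ → STy S
  | var k, U, j => if k = j then shiftTV j 0 U else if j < k then var (k - 1) else var k
  | arrow A B, U, j => arrow (substTV A U j) (substTV B U j)
  | all T, U, j => all (substTV T U (j + 1))
  | smul a T, U, j => smul a (substTV T U j)
  | zero, _, _ => zero

/-- Abstract the free type variable `n` of `T` (at depth `c`), so that
`all (closeTV T n 0)` is `∀X.T` where `X` is the free variable `n`. -/
def closeTV : STy S → ℕ → ℕ → STy S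
  | var k, n, c => if k < c then var k else if k = n + c then var c else var (k + 1)
  | arrow A B, n, c => arrow (closeTV A n c) (closeTV B n c)
  | all T, n, c => all (closeTV T n (c + 1))
  | smul a T, n, c => smul a (closeTV T n c)
  | zero, _, _ => zero

/-- `T[U / X]` for a *free* type variable named `n` (no binder is removed). -/
def substFreeAux : STy S → ℕ → STy S → ℕ → STy S
  | var k, n, U, c => if k = n + c then shiftTV c 0 U else var k
  | arrow A B, n, U, c => arrow (substFreeAux A n U c) (substFreeAux B n U c)
  | all T, n, U, c => all (substFreeAux T n U (c + 1))
  | smul a T, n, U, c => smul a (substFreeAux T n U c)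
  | zero, _, _, _ => zero

def substFree (T : STy S) (n : ℕ) (U : STy S) : STy S := substFreeAux T n U 0

/-- Free type variables. -/
def ftvAux : STy S → ℕ → Finset ℕ
  | var k, c => if k < c then ∅ else {k - c}
  | arrow A B, c => ftvAux A c ∪ ftvAux B c
  | all T, c => ftvAux T (c + 1)
  | smul _ T, c => ftvAux T c
  | zero, _ => ∅

def ftv (T : STy S) : Finset ℕ := ftvAux T 0

end STy

/-- Free type variables of a context. -/
def ftvCtx {S : Type} (Γ : List (STy S)) : Finset ℕ :=
  Γ.foldr (fun T s => T.ftv ∪ s) ∅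

/-- Type equivalence `≡`: the least congruence with
`α.0̄ ≡ 0̄`, `0.T ≡ 0̄`, `1.T ≡ T`, `α.(β.T) ≡ (α×β).T`, `∀X.α.T ≡ α.∀X.T`. -/
inductive SEq {S : Type} [CommRing S] : STy S → STy S → Prop
  | refl (T : STy S) : SEq T T
  | symm {T T' : STy S} : SEq T T' → SEq T' T
  | trans {T T' T'' : STy S} : SEq T T' → SEq T' T'' → SEq T T''
  | smulZero (a : S) : SEq (STy.smul a STy.zero) STy.zero
  | zeroSmul (T : STy S) : SEq (STy.smul 0 T) STy.zero
  | oneSmul (T : STy S) : SEq (STy.smul 1 T) T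
  | smulSmul (a b : S) (T : STy S) : SEq (STy.smul a (STy.smul b T)) (STy.smul (a * b) T)
  | allSmul (a : S) (T : STy S) : SEq (STy.all (STy.smul a T)) (STy.smul a (STy.all T))
  | arrowCong {U U' T T' : STy S} : SEq U U' → SEq T T' → SEq (STy.arrow U T) (STy.arrow U' T')
  | allCong {T T' : STy S} : SEq T T' → SEq (STy.all T) (STy.all T')
  | smulCong (a : S) {T T' : STy S} : SEq T T' → SEq (STy.smul a T) (STy.smul a T')

/-- `T ≺ R` iff either `R ≡ ∀X.T`, or `T ≡ ∀X.S` and `R ≡ S[U/X]` for some unit type `U`. -/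
def Prec {S : Type} [CommRing S] (T R : STy S) : Prop :=
  (∃ n : ℕ, SEq R (STy.all (STy.closeTV T n 0))) ∨
  (∃ Sb U : STy S, STy.IsUnit U ∧ SEq T (STy.all Sb) ∧ SEq R (STy.substTV Sb U 0))

/-- `⪯` : reflexive and transitive closure of `≺`. -/
def PrecEq {S : Type} [CommRing S] : STy S → STy S → Prop := Relation.ReflTransGen Prec

/-! ### The Scalar typing judgment -/

inductive Typ {S : Type} [CommRing S] : List (STy S) → Trm S → STy S → Prop
  | ax {Γ : List (STy S)} {n : ℕ} {U : STy S} : Γ[n]? = some U → Typ Γ (Trm.var n) U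
  | equiv {Γ : List (STy S)} {t : Trm S} {T T' : STy S} : Typ Γ t T → SEq T T' → Typ Γ t T'
  | arrE {Γ : List (STy S)} {t r : Trm S} {U T : STy S} {a b : S} :
      Typ Γ t (STy.smul a (STy.arrow U T)) → Typ Γ r (STy.smul b U) →
      Typ Γ (Trm.app t r) (STy.smul (a * b) T)
  | arrI {Γ : List (STy S)} {t : Trm S} {U T : STy S} :
      STy.IsUnit U → Typ (U :: Γ) t T → Typ Γ (Trm.lam t) (STy.arrow U T)
  | allE {Γ : List (STy S)} {t : Trm S} {T U : STy S} :
      Typ Γ t (STy.all T) → STy.IsUnit U → Typ Γ t (STy.substTV T U 0)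
  | allI {Γ : List (STy S)} {t : Trm S} {T : STy S} :
      Typ (Γ.map (STy.shiftTV 1 0)) t T → Typ Γ t (STy.all T)
  | ax0 {Γ : List (STy S)} : Typ Γ Trm.zero STy.zero
  | addI {Γ : List (STy S)} {t r : Trm S} {T : STy S} {a b : S} :
      Typ Γ t (STy.smul a T) → Typ Γ r (STy.smul b T) →
      Typ Γ (Trm.add t r) (STy.smul (a + b) T)
  | smulI {Γ : List (STy S)} {t : Trm S} {T : STy S} (a : S) :
      Typ Γ t T → Typ Γ (Trm.smul a t) (STy.smul a T)

/-! ### λ2^la -/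

inductive FTy : Type where
  | var : ℕ → FTy
  | arrow : FTy → FTy → FTy
  | all : FTy → FTy

namespace FTy

def shiftTV (d : ℕ) : ℕ → FTy → FTy
  | c, var k => if k < c then var k else var (k + d)
  | c, arrow A B => arrow (shiftTV d c A) (shiftTV d c B)
  | c, all A => all (shiftTV d (c + 1) A)

def substTV : FTy → FTy → ℕ → FTy
  | var k, B, j => if k = j then shiftTV j 0 B else if j < k then var (k - 1) else var k
  | arrow A C, B, j => arrow (substTV A B j) (substTV C B j)
  | all A, B, j => all (substTV A B (j + 1))

end FTy

/-- The typing judgment of λ2^la : System F rules over Lineal terms plus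
`ax0`, `+I` and `sI`. -/
inductive FTyp {S : Type} [CommRing S] : List FTy → Trm S → FTy → Prop
  | ax {Γ : List FTy} {n : ℕ} {A : FTy} : Γ[n]? = some A → FTyp Γ (Trm.var n) A
  | arrE {Γ : List FTy} {t r : Trm S} {A B : FTy} :
      FTyp Γ t (FTy.arrow A B) → FTyp Γ r A → FTyp Γ (Trm.app t r) B
  | arrI {Γ : List FTy} {t : Trm S} {A B : FTy} :
      FTyp (A :: Γ) t B → FTyp Γ (Trm.lam t) (FTy.arrow A B)
  | allE {Γ : List FTy} {t : Trm S} {A : FTy} (B : FTy) :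
      FTyp Γ t (FTy.all A) → FTyp Γ t (FTy.substTV A B 0)
  | allI {Γ : List FTy} {t : Trm S} {A : FTy} :
      FTyp (Γ.map (FTy.shiftTV 1 0)) t A → FTyp Γ t (FTy.all A)
  | ax0 {Γ : List FTy} (A : FTy) : FTyp Γ Trm.zero A
  | addI {Γ : List FTy} {t r : Trm S} {A : FTy} :
      FTyp Γ t A → FTyp Γ r A → FTyp Γ (Trm.add t r) A
  | smulI {Γ : List FTy} {t : Trm S} {A : FTy} (a : S) :
      FTyp Γ t A → FTyp Γ (Trm.smul a t) A

/-! ### Saturated sets and the interpretation of λ2^la types -/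

/-- Saturated subsets of SN. -/
structure IsSaturated {S : Type} [CommRing S] (X : Set (Trm S)) : Prop where
  subset_sn : X ⊆ SNset S
  var_app : ∀ (n : ℕ) (l : List (Trm S)), (∀ u ∈ l, u ∈ SNset S) →
      Trm.appList (Trm.var n) l ∈ X
  beta_exp : ∀ (v b : Trm S) (l : List (Trm S)), b.IsBasis →
      Trm.appList (Trm.subst v b 0) l ∈ X → Trm.appList (Trm.app (Trm.lam v) b) l ∈ X
  add_mem : ∀ {t u : Trm S}, t ∈ X → u ∈ X → Trm.add t u ∈ X
  smul_iff : ∀ (a : S) (t : Trm S), t ∈ X ↔ Trm.smul a t ∈ X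
  sum_app : ∀ (u : Trm S) (us l : List (Trm S)),
      (∀ v ∈ u :: us, Trm.appList v l ∈ X) → Trm.appList (Trm.sumList u us) l ∈ X
  app_sum : ∀ (t v : Trm S) (vs l : List (Trm S)),
      (∀ w ∈ v :: vs, Trm.appList (Trm.app t w) l ∈ X) →
      Trm.appList (Trm.app t (Trm.sumList v vs)) l ∈ X
  smul_head : ∀ (a : S) (t : Trm S) (l : List (Trm S)),
      Trm.smul a (Trm.appList t l) ∈ X ↔ Trm.appList (Trm.smul a t) l ∈ X
  smul_arg : ∀ (a : S) (t : Trm S) (l₁ : List (Trm S)) (u : Trm S) (l₂ : List (Trm S)),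
      Trm.smul a (Trm.appList t (l₁ ++ u :: l₂)) ∈ X ↔
      Trm.appList t (l₁ ++ Trm.smul a u :: l₂) ∈ X
  zero_mem : Trm.zero ∈ X
  zero_app : ∀ l : List (Trm S), (∀ u ∈ l, u ∈ SNset S) → Trm.appList Trm.zero l ∈ X
  app_zero : ∀ (t : Trm S) (l : List (Trm S)), t ∈ SNset S → (∀ u ∈ l, u ∈ SNset S) →
      Trm.appList (Trm.app t Trm.zero) l ∈ X

/-- Extension of a type-variable valuation (de Bruijn). -/
def consVal {S : Type} (Y : Set (Trm S)) (ξ : ℕ → Set (Trm S)) : ℕ → Set (Trm S)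
  | 0 => Y
  | n + 1 => ξ n

/-- Interpretation `⟦A⟧_ξ` of a λ2^la type. -/
def FTy.interp {S : Type} [CommRing S] : FTy → (ℕ → Set (Trm S)) → Set (Trm S)
  | FTy.var n, ξ => ξ n
  | FTy.arrow A B, ξ => { F | ∀ s ∈ interp A ξ, Trm.app F s ∈ interp B ξ }
  | FTy.all A, ξ => ⋂ Y ∈ { X : Set (Trm S) | IsSaturated X }, interp A (consVal Y ξ)

/-- `ρ, ξ ⊨ Γ`. -/
def SatCtx {S : Type} [CommRing S] (ρ : ℕ → Trm S) (ξ : ℕ → Set (Trm S))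
    (Γ : List FTy) : Prop :=
  ∀ (n : ℕ) (A : FTy), Γ[n]? = some A → ρ n ∈ FTy.interp A ξ

/-- The `♮` map erasing scalars, sending `0̄` to a fixed λ2^la type `A`. -/
def STy.flat {S : Type} (A : FTy) : STy S → FTy
  | STy.var n => FTy.var n
  | STy.arrow U T => FTy.arrow (flat A U) (flat A T)
  | STy.all T => FTy.all (flat A T)
  | STy.smul _ T => flat A T
  | STy.zero => A

end Lineal
namespace Lineal

/-!
Along a `≺`-chain out of `V→R` every type is equivalent to `∀X₁…Xₖ. G`, where `G` arises from
`V→R` by generalising free variables and instantiating outermost binders with unit types.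
Instantiating the `k` pending binders by fresh variables turns each generalisation and each
instantiation into a free substitution. At the end of the chain `k = 0`, because `≡` never
identifies an arrow with a `∀`; this fact and the injectivity of `∀` under `≡` come from a
canonical form `canon` with `T ≡ T' ↔ canon T = canon T'` (over a nontrivial ring; over the zero
ring all types are equivalent).
-/

namespace STy

variable {S : Type}

def alls : ℕ → STy S → STy S
  | 0, T => T
  | k + 1, T => all (alls k T)

def indexBound : STy S → ℕ
  | var k => k + 1
  | arrow A B => max (indexBound A) (indexBound B)
  | all T => indexBound T
  | smul _ T => indexBound T
  | zero => 0

lemma substTV_shiftTV_succ (W : STy S) (A : STy S) {c d j : ℕ} (hc : c ≤ j) (hj : j ≤ c + d) :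
    substTV (shiftTV (d + 1) c A) W j = shiftTV d c A := by
  induction A generalizing c j with
  | var k => grind [substTV, shiftTV]
  | arrow A B ihA ihB => simp only [shiftTV, substTV, ihA hc hj, ihB hc hj]
  | all T ih => simp only [shiftTV, substTV, ih (Nat.succ_le_succ hc) (by omega)]
  | smul a T ih => simp only [shiftTV, substTV, ih hc hj]
  | zero => rfl

lemma substTV_closeTV (W G : STy S) (m c : ℕ) :
    substTV (closeTV G m c) W c = substFreeAux G m W c := by
  induction G generalizing c with
  | var k => grind [substTV, closeTV, substFreeAux]
  | arrow A B ihA ihB => simp only [closeTV, substTV, substFreeAux, ihA, ihB]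
  | all T ih => simp only [closeTV, substTV, substFreeAux, ih]
  | smul a T ih => simp only [closeTV, substTV, substFreeAux, ih]
  | zero => rfl

lemma substTV_var_substFreeAux (R H : STy S) {m q : ℕ} (hqm : q ≠ m) (j : ℕ) :
    substTV (substFreeAux H m R (j + 1)) (var q) j = substFreeAux (substTV H (var q) j) m R j := by
  induction H generalizing j with
  | var v =>
      by_cases h : v = m + (j + 1)
      · rw [substFreeAux, if_pos h, substTV_shiftTV_succ (var q) R (Nat.zero_le j) (by omega)]
        grind [substTV, substFreeAux]
      · grind [substTV, shiftTV, substFreeAux]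
  | arrow A B ihA ihB => simp only [substFreeAux, substTV, ihA, ihB]
  | all T ih => simp only [substFreeAux, substTV, ih]
  | smul a T ih => simp only [substFreeAux, substTV, ih]
  | zero => rfl

lemma substTV_eq_substFreeAux_substTV_var (W G : STy S) {p : ℕ} (hp : indexBound G ≤ p)
    (j : ℕ) : substTV G W j = substFreeAux (substTV G (var p) j) p W j := by
  induction G generalizing j with
  | var v =>
      simp only [indexBound] at hp
      grind [substTV, shiftTV, substFreeAux]
  | arrow A B ihA ihB =>
      simp only [indexBound, max_le_iff] at hp
      simp only [substTV, substFreeAux, ihA hp.1, ihB hp.2]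
  | all T ih => simp only [substTV, substFreeAux, ih hp]
  | smul a T ih => simp only [substTV, substFreeAux, ih hp]
  | zero => rfl

lemma closeTV_alls (k : ℕ) (G : STy S) (m c : ℕ) :
    closeTV (alls k G) m c = alls k (closeTV G m (c + k)) := by
  induction k generalizing c with
  | zero => rfl
  | succ k ih => simp only [alls, closeTV, ih, Nat.add_right_comm c 1 k, Nat.add_assoc]

lemma substTV_alls (k : ℕ) (G W : STy S) (j : ℕ) :
    substTV (alls k G) W j = alls k (substTV G W (j + k)) := by
  induction k generalizing j with
  | zero => rfl
  | succ k ih => simp only [alls, substTV, ih, Nat.add_right_comm j 1 k, Nat.add_assoc]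

/-- Instantiates the binders of `alls ps.length G` by the variables `ps`, outermost first. -/
def instVars : STy S → List ℕ → STy S
  | G, [] => G
  | G, p :: ps => instVars (substTV G (var p) ps.length) ps

lemma instVars_substFreeAux (R H : STy S) {m : ℕ} {ps : List ℕ} (hm : m ∉ ps) :
    instVars (substFreeAux H m R ps.length) ps = substFree (instVars H ps) m R := by
  induction ps generalizing H with
  | nil => rfl
  | cons p ps ih =>
      simp only [List.mem_cons, not_or] at hm
      simp only [instVars, List.length_cons]
      rw [substTV_var_substFreeAux R H (Ne.symm hm.1), ih _ hm.2]

lemma instVars_cons_closeTV (G : STy S) {m : ℕ} (p : ℕ) {ps : List ℕ} (hm : m ∉ ps) :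
    instVars (closeTV G m ps.length) (p :: ps) = substFree (instVars G ps) m (var p) := by
  rw [instVars, substTV_closeTV, instVars_substFreeAux _ _ hm]

lemma instVars_substTV (W G : STy S) {p : ℕ} {ps : List ℕ} (hG : indexBound G ≤ p)
    (hp : p ∉ ps) :
    instVars (substTV G W ps.length) ps = substFree (instVars G (p :: ps)) p W := by
  rw [substTV_eq_substFreeAux_substTV_var W G hG, instVars_substFreeAux _ _ hp, instVars]

section Equiv

variable [CommRing S]

open Classical in
noncomputable def pack (x : S × STy S) : STy S := if x.1 = 0 then zero else smul x.1 x.2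

/-- `nf T = (α, C)` pulls all the scalars of `T` out of the `∀`s into `α`, so that `T ≡ α.C`;
inside arrows the components are put in canonical form. -/
noncomputable def nf : STy S → S × STy S
  | var n => (1, var n)
  | zero => (0, zero)
  | all T => ((nf T).1, all (nf T).2)
  | smul a T => (a * (nf T).1, (nf T).2)
  | arrow A B => (1, arrow (pack (nf A)) (pack (nf B)))

noncomputable def canon (T : STy S) : STy S := pack (nf T)

lemma pack_eq_pack_iff {x y : S × STy S} :
    pack x = pack y ↔ x.1 = y.1 ∧ (x.1 = 0 ∨ x.2 = y.2) := by
  unfold pack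
  split_ifs with hx hy hy
  · simp [hx, hy]
  · simp [hx, Ne.symm hy]
  · simp [hx, hy]
  · simp [hx]

lemma canon_eq_canon_of_seq {T T' : STy S} (h : SEq T T') : canon T = canon T' := by
  induction h with
  | refl => rfl
  | symm _ ih => exact ih.symm
  | trans _ _ ih₁ ih₂ => exact ih₁.trans ih₂
  | smulZero | zeroSmul => simp [canon, nf, pack]
  | oneSmul T => show pack (1 * (nf T).1, _) = _; rw [one_mul]; rfl
  | smulSmul => simp [canon, nf, mul_assoc]
  | allSmul => rfl
  | arrowCong _ _ ih₁ ih₂ => simp only [canon, nf] at ih₁ ih₂ ⊢; rw [ih₁, ih₂]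
  | allCong _ ih =>
      simp only [canon, nf, pack_eq_pack_iff] at ih ⊢
      exact ⟨ih.1, ih.2.imp_right (congrArg all)⟩
  | smulCong a _ ih =>
      simp only [canon, nf, pack_eq_pack_iff] at ih ⊢
      exact ⟨by rw [ih.1], ih.2.imp_left fun h => by rw [h, mul_zero]⟩

lemma smul_seq_pack (x : S × STy S) : SEq (smul x.1 x.2) (pack x) := by
  unfold pack
  split_ifs with hx
  · exact hx ▸ SEq.zeroSmul _
  · exact SEq.refl _

lemma seq_canon (T : STy S) : SEq T (canon T) := by
  suffices SEq T (smul (nf T).1 (nf T).2) from this.trans (smul_seq_pack _)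
  induction T with
  | var n => exact (SEq.oneSmul _).symm
  | arrow A B ihA ihB =>
      exact (SEq.arrowCong (ihA.trans (smul_seq_pack _)) (ihB.trans (smul_seq_pack _))).trans
        (SEq.oneSmul _).symm
  | all T ih => exact (SEq.allCong ih).trans (SEq.allSmul _ _)
  | smul a T ih => exact (SEq.smulCong a ih).trans (SEq.smulSmul _ _ _)
  | zero => exact (SEq.zeroSmul _).symm

theorem seq_iff_canon_eq {T T' : STy S} : SEq T T' ↔ canon T = canon T' :=
  ⟨canon_eq_canon_of_seq, fun h => (seq_canon T).trans (h ▸ (seq_canon T').symm)⟩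

lemma seq_of_subsingleton [Subsingleton S] (T T' : STy S) : SEq T T' := by
  simp [seq_iff_canon_eq, canon, pack, Subsingleton.elim _ (0 : S)]

lemma not_seq_arrow_all [Nontrivial S] (A B C : STy S) : ¬ SEq (arrow A B) (all C) := by
  simp [seq_iff_canon_eq, canon, nf, pack_eq_pack_iff]

lemma seq_of_seq_all {A B : STy S} (h : SEq (all A) (all B)) : SEq A B := by
  simp only [seq_iff_canon_eq, canon, nf, pack_eq_pack_iff, all.injEq] at h ⊢
  exact h


lemma seq_closeTV {A B : STy S} (h : SEq A B) (m c : ℕ) :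
    SEq (closeTV A m c) (closeTV B m c) := by
  induction h generalizing c with
  | refl => exact SEq.refl _
  | symm _ ih => exact (ih c).symm
  | trans _ _ ih₁ ih₂ => exact (ih₁ c).trans (ih₂ c)
  | smulZero a => exact SEq.smulZero a
  | zeroSmul => exact SEq.zeroSmul _
  | oneSmul => exact SEq.oneSmul _
  | smulSmul a b => exact SEq.smulSmul a b _
  | allSmul a => exact SEq.allSmul a _
  | arrowCong _ _ ih₁ ih₂ => exact SEq.arrowCong (ih₁ c) (ih₂ c)
  | allCong _ ih => exact SEq.allCong (ih (c + 1))
  | smulCong a _ ih => exact SEq.smulCong a (ih c)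

lemma seq_substTV {A B : STy S} (h : SEq A B) (W : STy S) (j : ℕ) :
    SEq (substTV A W j) (substTV B W j) := by
  induction h generalizing j with
  | refl => exact SEq.refl _
  | symm _ ih => exact (ih j).symm
  | trans _ _ ih₁ ih₂ => exact (ih₁ j).trans (ih₂ j)
  | smulZero a => exact SEq.smulZero a
  | zeroSmul => exact SEq.zeroSmul _
  | oneSmul => exact SEq.oneSmul _
  | smulSmul a b => exact SEq.smulSmul a b _
  | allSmul a => exact SEq.allSmul a _
  | arrowCong _ _ ih₁ ih₂ => exact SEq.arrowCong (ih₁ j) (ih₂ j)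
  | allCong _ ih => exact SEq.allCong (ih (j + 1))
  | smulCong a _ ih => exact SEq.smulCong a (ih j)

end Equiv

end STy

/-- `GenInst A₀ k G`: the type `∀ᵏ. G` is obtained from `A₀` by generalising free variables and
instantiating outermost binders with unit types. -/
inductive GenInst {S : Type} (A₀ : STy S) : ℕ → STy S → Prop
  | base : GenInst A₀ 0 A₀
  | close (m : ℕ) {k : ℕ} {G : STy S} : GenInst A₀ k G → GenInst A₀ (k + 1) (STy.closeTV G m k)
  | inst {k : ℕ} {G : STy S} (W : STy S) : STy.IsUnit W → GenInst A₀ (k + 1) G →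
      GenInst A₀ k (STy.substTV G W k)

def IsFreeInstance {S : Type} (A₀ B : STy S) : Prop :=
  ∃ l : List (ℕ × STy S), (∀ p ∈ l, STy.IsUnit p.2) ∧
    B = l.foldl (fun (A : STy S) p => STy.substFree A p.1 p.2) A₀

namespace IsFreeInstance

variable {S : Type} {A₀ B : STy S}

lemma refl (A₀ : STy S) : IsFreeInstance A₀ A₀ := ⟨[], by simp, rfl⟩

lemma substFree (h : IsFreeInstance A₀ B) (n : ℕ) {W : STy S} (hW : STy.IsUnit W) :
    IsFreeInstance A₀ (B.substFree n W) := by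
  obtain ⟨l, hl, rfl⟩ := h
  refine ⟨l ++ [(n, W)], fun p hp => ?_, by rw [List.foldl_append]; rfl⟩
  rcases List.mem_append.mp hp with hp | hp
  · exact hl p hp
  · rw [List.mem_singleton.mp hp]
    exact hW

end IsFreeInstance

namespace GenInst

variable {S : Type} {A₀ : STy S}

lemma exists_arrow {V R : STy S} {k : ℕ} {G : STy S} (h : GenInst (STy.arrow V R) k G) :
    ∃ A B, G = STy.arrow A B := by
  induction h with
  | base => exact ⟨V, R, rfl⟩
  | close _ _ ih | inst _ _ _ ih =>
      obtain ⟨A, B, rfl⟩ := ih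
      exact ⟨_, _, rfl⟩

theorem isFreeInstance_instVars {k : ℕ} {G : STy S} (h : GenInst A₀ k G) :
    ∃ N, ∀ ps : List ℕ, ps.length = k → (∀ p ∈ ps, N ≤ p) →
      IsFreeInstance A₀ (STy.instVars G ps) := by
  induction h with
  | base =>
      refine ⟨0, fun ps hps _ => ?_⟩
      rw [List.length_eq_zero_iff.mp hps]
      exact IsFreeInstance.refl A₀
  | @close m k G _ ih =>
      obtain ⟨N, hN⟩ := ih
      refine ⟨max N (m + 1), fun ps hps hfresh => ?_⟩
      obtain ⟨p, ps, rfl⟩ := List.exists_cons_of_length_eq_add_one hps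
      simp only [List.mem_cons, forall_eq_or_imp, max_le_iff] at hfresh
      have hm : m ∉ ps := fun hm => by have := (hfresh.2 m hm).2; omega
      rw [List.length_cons, Nat.add_right_cancel_iff] at hps
      rw [← hps, STy.instVars_cons_closeTV G p hm]
      exact (hN ps hps fun q hq => (hfresh.2 q hq).1).substFree m (STy.IsUnit.var p)
  | @inst k G W hW _ ih =>
      obtain ⟨N, hN⟩ := ih
      refine ⟨N, fun ps hps hfresh => ?_⟩
      -- a variable occurring neither in `G` nor in `ps`
      set p := STy.indexBound G + N + ps.sum + 1
      have hp : p ∉ ps := fun hp => by have := List.le_sum_of_mem hp; omega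
      rw [← hps, STy.instVars_substTV W G (by omega) hp]
      refine (hN (p :: ps) (by simp [hps]) ?_).substFree p hW
      simpa using ⟨by omega, hfresh⟩

end GenInst

theorem exists_genInst_of_precEq {S : Type} [CommRing S] [Nontrivial S] {V R X : STy S}
    (h : PrecEq (STy.arrow V R) X) :
    ∃ k G, SEq X (STy.alls k G) ∧ GenInst (STy.arrow V R) k G := by
  induction h with
  | refl => exact ⟨0, _, SEq.refl _, GenInst.base⟩
  | @tail Y Z _ hYZ ih =>
      obtain ⟨k, G, hY, hG⟩ := ih
      rcases hYZ with ⟨m, hZ⟩ | ⟨B, W, hW, hYB, hZ⟩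
      · refine ⟨k + 1, STy.closeTV G m k, ?_, hG.close m⟩
        have hYG := SEq.allCong (STy.seq_closeTV hY m 0)
        rw [STy.closeTV_alls, Nat.zero_add] at hYG
        exact hZ.trans hYG
      · cases k with
        | zero =>
            obtain ⟨A, A', rfl⟩ := hG.exists_arrow
            exact absurd (hY.symm.trans hYB) (STy.not_seq_arrow_all _ _ _)
        | succ k =>
            refine ⟨k, STy.substTV G W k, ?_, hG.inst W hW⟩
            have hBG := STy.seq_substTV (STy.seq_of_seq_all (hYB.symm.trans hY)) W 0
            rw [STy.substTV_alls, Nat.zero_add] at hBG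
            exact hZ.trans hBG

/-- **Arrows comparison.**
If `V→R ⪯ U→T` then `U→T ≡ (V→R)[W₁/X₁]…[Wₙ/Xₙ]` for some unit types `W₁,…,Wₙ` and
type variables `X₁,…,Xₙ`. -/
theorem arrows_comparison {S : Type} [CommRing S] (U V : STy S) (T R : STy S)
    (hU : STy.IsUnit U) (hV : STy.IsUnit V) (hT : STy.WF T) (hR : STy.WF R)
    (h : PrecEq (STy.arrow V R) (STy.arrow U T)) :
    ∃ l : List (ℕ × STy S), (∀ p ∈ l, STy.IsUnit p.2) ∧
      SEq (STy.arrow U T)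
        (l.foldl (fun (A : STy S) p => STy.substFree A p.1 p.2) (STy.arrow V R)) := by
  rcases subsingleton_or_nontrivial S with _ | _
  · exact ⟨[], by simp, STy.seq_of_subsingleton _ _⟩
  obtain ⟨k, G, hUT, hG⟩ := exists_genInst_of_precEq h
  cases k with
  | succ k => exact absurd hUT (STy.not_seq_arrow_all _ _ _)
  | zero =>
      obtain ⟨N, hN⟩ := hG.isFreeInstance_instVars
      obtain ⟨l, hl, hGl⟩ := hN [] rfl (by simp)
      exact ⟨l, hl, hGl ▸ hUT⟩

end Lineal
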